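/- arXiv:1709.09617 — 5 statements merged into one kernel-verified Lean document; each statement's English description precedes it below -/
import Mathlib

section
/- An integer n ≥ 1 is not the semi-perimeter of a Pythagorean triangle if and only if ⟨⟨n⟩⟩_2 ∈ (ab)*, i.e. ⟨⟨n⟩⟩_2 = (ab)^k for some integer k ≥ 0 (in fact k ≥ 1). -/
open scoped Classical symmDiff

/-- The set `D_n` of positive divisors of `n`, viewed inside `ℝ`. -/
noncomputable def divisorsR (n : ℕ) : Finset ℝ :=
  n.divisors.image (fun d => (d : ℝ))

/-- The set `λ·D_n = {λd : d ∣ n}`, viewed inside `ℝ`. -/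
noncomputable def lamDivisorsR (l : ℝ) (n : ℕ) : Finset ℝ :=
  n.divisors.image (fun d => l * (d : ℝ))

/-- The word `⟨⟨n⟩⟩_λ` over the alphabet `{a, b}`, encoded with `true = a` and
`false = b`: list the elements of the symmetric difference `D_n ∆ λD_n` in
increasing order, writing `a` for elements of `D_n \ λD_n` and `b` for
elements of `λD_n \ D_n`. -/
noncomputable def krWord (l : ℝ) (n : ℕ) : List Bool :=
  ((divisorsR n ∆ lamDivisorsR l n).sort (· ≤ ·)).map (fun x => decide (x ∈ divisorsR n))

/-- A Dyck word (`true = a`, `false = b`): every prefix has at least as many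
`a`'s as `b`'s, and the whole word has equally many `a`'s and `b`'s. -/
def IsDyck (w : List Bool) : Prop :=
  (∀ p : List Bool, p <+: w → p.count false ≤ p.count true) ∧
    w.count true = w.count false

/-- The number of centered tunnels of a word `w` of length `2m`:
the number of (0-indexed) `i < m` such that `w_i = a`, `w_{2m-1-i} = b`, and the
factor strictly between these two positions is a Dyck word. -/
noncomputable def ct (w : List Bool) : ℕ :=
  ((Finset.range (w.length / 2)).filter (fun i =>
    w.getD i false = true ∧ w.getD (w.length - 1 - i) true = false ∧
      IsDyck ((w.drop (i + 1)).take (w.length - 2 * (i + 1))))).card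

/-- `Omega w`: the number of irreducible factors of the Dyck word `w`, i.e. the
number of nonempty prefixes of `w` that are Dyck words (returns to height 0). -/
noncomputable def Omega (w : List Bool) : ℕ :=
  ((Finset.range w.length).filter (fun i => IsDyck (w.take (i + 1)))).card

/-- `blocksCount l n`: the number of connected components of `⋃_{d ∣ n} [d, l·d] ⊆ ℝ`. -/
noncomputable def blocksCount (l : ℝ) (n : ℕ) : ℕ :=
  Nat.card (ConnectedComponents (↥(⋃ d ∈ n.divisors, Set.Icc (d : ℝ) (l * d))))

/-- `middleCount l n`: the number of divisors `d` of `n` with `√(n/l) < d ≤ √(l·n)`. -/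
noncomputable def middleCount (l : ℝ) (n : ℕ) : ℕ :=
  (n.divisors.filter (fun d => Real.sqrt (n / l) < (d : ℝ) ∧ (d : ℝ) ≤ Real.sqrt (l * n))).card

/-- The height of a word: the maximum over all prefixes of (#a − #b). -/
def wordHeight (w : List Bool) : ℕ :=
  (Finset.range (w.length + 1)).sup (fun i => (w.take i).count true - (w.take i).count false)

/-- `ellAB w` for a word of length `2m`: the number of (0-indexed) `i < m`
with `w_i = a` and `w_{2m-1-i} = b`. -/
def ellAB (w : List Bool) : ℕ :=
  ((Finset.range (w.length / 2)).filter (fun i =>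
    w.getD i false = true ∧ w.getD (w.length - 1 - i) true = false)).card

/-- `n` is the semi-perimeter of a Pythagorean triangle. -/
def IsPythSemiPerimeter (n : ℕ) : Prop :=
  ∃ x y z : ℕ, 0 < x ∧ 0 < y ∧ 0 < z ∧ x ^ 2 + y ^ 2 = z ^ 2 ∧ x + y + z = 2 * n

/-- `n` is even-trapezoidal: it admits a partition into an even number of
consecutive parts. -/
def IsEvenTrapezoidal (n : ℕ) : Prop :=
  ∃ a m : ℕ, 1 ≤ a ∧ 1 ≤ m ∧ n = ∑ k ∈ Finset.range (2 * m), (a + k)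

section KRAux

set_option maxHeartbeats 1000000


-- helper: odd divisor times full 2-power divides n
lemma odd_dvd_ord {n c : ℕ} (hn : n ≠ 0) (hc : c ∣ n) (ho : Odd c) :
    2 ^ n.factorization 2 * c ∣ n := by
  have h2 : Nat.Coprime c (2 ^ n.factorization 2) :=
    Nat.Coprime.pow_right _ (ho.coprime_two_right)
  have hsplit : 2 ^ n.factorization 2 * (n / 2 ^ n.factorization 2) = n :=
    Nat.ordProj_mul_ordCompl_eq_self n 2
  have hc' : c ∣ n / 2 ^ n.factorization 2 := by
    refine h2.dvd_of_dvd_mul_right ?_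
    rw [mul_comm] at hsplit
    rw [hsplit]; exact hc
  calc 2 ^ n.factorization 2 * c ∣ 2 ^ n.factorization 2 * (n / 2 ^ n.factorization 2) :=
        mul_dvd_mul_left _ hc'
    _ = n := hsplit

lemma not_dvd_pow_succ {n : ℕ} (hn : n ≠ 0) (c : ℕ) :
    ¬ (2 ^ (n.factorization 2 + 1) * c ∣ n) := by
  intro h
  exact Nat.pow_succ_factorization_not_dvd hn Nat.prime_two (dvd_trans (dvd_mul_right _ _) h)

lemma pow_le_factorization {n a : ℕ} (hn : n ≠ 0) (h : 2 ^ a ∣ n) : a ≤ n.factorization 2 :=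
  (Nat.Prime.pow_dvd_iff_le_factorization Nat.prime_two hn).mp h

/-- `n` is a semiperimeter iff it has a "trapezoid" factorization. -/
lemma pyth_iff_hasMS {n : ℕ} (hn : n ≠ 0) :
    IsPythSemiPerimeter n ↔ ∃ m s : ℕ, 0 < m ∧ m < s ∧ s < 2 * m ∧ m * s ∣ n := by
  constructor
  · rintro ⟨x, y, z, hx, hy, hz, hpyth, hsum⟩
    have ht : PythagoreanTriple (x : ℤ) (y : ℤ) (z : ℤ) := by
      have := hpyth
      simp only [PythagoreanTriple]
      push_cast
      nlinarith [hpyth]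
    obtain ⟨k, p, q, hxy, hzc⟩ := PythagoreanTriple.classification.mp ht
    have hxpos : (0:ℤ) < x := by exact_mod_cast hx
    have hypos : (0:ℤ) < y := by exact_mod_cast hy
    have hzpos : (0:ℤ) < z := by exact_mod_cast hz
    have hsum' : (x:ℤ) + y + z = 2 * n := by exact_mod_cast hsum
    have hPQ : 0 < k * (2 * p * q) ∧ 0 < k * (p ^ 2 - q ^ 2) := by
      rcases hxy with ⟨h1, h2⟩ | ⟨h1, h2⟩
      · exact ⟨h2 ▸ hypos, h1 ▸ hxpos⟩
      · exact ⟨h1 ▸ hxpos, h2 ▸ hypos⟩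
    have hxyeq : (x:ℤ) + y = k * (p ^ 2 - q ^ 2) + k * (2 * p * q) := by
      rcases hxy with ⟨h1, h2⟩ | ⟨h1, h2⟩ <;> rw [h1, h2] <;> ring
    rcases hzc with hzc | hzc
    · -- z = k * (p² + q²), so k > 0
      have hk : 0 < k := by
        rcases mul_pos_iff.mp (hzc ▸ hzpos) with ⟨h1, _⟩ | ⟨_, h2⟩
        · exact h1
        · nlinarith
      have hpq : 0 < p * q := by
        have := hPQ.1
        nlinarith
      have hsq : q ^ 2 < p ^ 2 := by
        have := hPQ.2
        nlinarith
      have hneq : (n:ℤ) = k * (p * (p + q)) := by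
        have h2 : (2:ℤ) * n = 2 * (k * (p * (p + q))) := by
          rw [← hsum', hxyeq, hzc]; ring
        exact mul_left_cancel₀ two_ne_zero h2
      have hnat : n = k.natAbs * (p.natAbs * (p + q).natAbs) := by
        have := congrArg Int.natAbs hneq
        simpa [Int.natAbs_mul] using this
      refine ⟨p.natAbs, (p + q).natAbs, ?_, ?_, ?_, ⟨k.natAbs, by rw [hnat]; ring⟩⟩ <;>
      · rcases pos_and_pos_or_neg_and_neg_of_mul_pos hpq with ⟨h1, h2⟩ | ⟨h1, h2⟩
        · have : q < p := by nlinarith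
          omega
        · have : p < q := by nlinarith
          omega
    · -- z = -k * (p² + q²), so k < 0
      have hk : k < 0 := by
        have hzpos' : 0 < -k * (p ^ 2 + q ^ 2) := hzc ▸ hzpos
        rw [neg_mul] at hzpos'
        rw [← neg_mul] at hzpos'
        rcases mul_pos_iff.mp hzpos' with ⟨h1, _⟩ | ⟨_, h2⟩
        · linarith
        · nlinarith
      have hpq : p * q < 0 := by
        have := hPQ.1
        nlinarith
      have hsq : p ^ 2 < q ^ 2 := by
        have := hPQ.2
        nlinarith
      have hneq : (n:ℤ) = k * (q * (p - q)) := by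
        have h2 : (2:ℤ) * n = 2 * (k * (q * (p - q))) := by
          rw [← hsum', hxyeq, hzc]; ring
        exact mul_left_cancel₀ two_ne_zero h2
      have hnat : n = k.natAbs * (q.natAbs * (p - q).natAbs) := by
        have := congrArg Int.natAbs hneq
        simpa [Int.natAbs_mul] using this
      refine ⟨q.natAbs, (p - q).natAbs, ?_, ?_, ?_, ⟨k.natAbs, by rw [hnat]; ring⟩⟩ <;>
      · rcases lt_trichotomy p 0 with h1 | h1 | h1
        · have h2 : 0 < q := by nlinarith
          have h3 : -p < q := by nlinarith
          omega
        · simp [h1] at hpq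
        · have h2 : q < 0 := by nlinarith
          have h3 : p < -q := by nlinarith
          omega
  · rintro ⟨m, s, hm, hms, hs2, hdvd⟩
    set e := s - m with he
    have he1 : 0 < e := by omega
    have he2 : e < m := by omega
    have hse : s = m + e := by omega
    set t := n / (m * s) with htdef
    have htn : t * (m * s) = n := Nat.div_mul_cancel hdvd
    have ht : 0 < t := by
      rcases Nat.eq_zero_or_pos t with h | h
      · exfalso; rw [h] at htn; simp at htn; omega
      · exact h
    have hee : e ^ 2 ≤ m ^ 2 := Nat.pow_le_pow_left (le_of_lt he2) 2
    refine ⟨t * (m ^ 2 - e ^ 2), t * (2 * m * e), t * (m ^ 2 + e ^ 2), ?_, ?_, ?_, ?_, ?_⟩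
    · have h1 : e ^ 2 < m ^ 2 := by
        have := Nat.pow_lt_pow_left he2 (n := 2) (by norm_num)
        exact this
      have : 0 < m ^ 2 - e ^ 2 := by omega
      positivity
    · positivity
    · positivity
    · zify [hee]; ring
    · have : t * (m ^ 2 - e ^ 2) + t * (2 * m * e) + t * (m ^ 2 + e ^ 2)
          = t * (2 * (m * (m + e))) := by zify [hee]; ring
      rw [this, show m + e = s from by omega]
      calc t * (2 * (m * s)) = 2 * (t * (m * s)) := by ring
        _ = 2 * n := by rw [htn]

/-- The spacing condition on odd divisors. -/
def QQ (n : ℕ) : Prop :=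
  ∀ c c' : ℕ, c ∣ n → c' ∣ n → Odd c → Odd c' → c < c' →
    2 ^ (n.factorization 2 + 1) * c < c'

lemma hasMS_of_pair {n : ℕ} (hn : n ≠ 0) {c c' : ℕ} (hc : c ∣ n) (hc' : c' ∣ n)
    (ho : Odd c) (ho' : Odd c') (hlt : c < c')
    (hub : c' < 2 ^ (n.factorization 2 + 1) * c) :
    ∃ m s : ℕ, 0 < m ∧ m < s ∧ s < 2 * m ∧ m * s ∣ n := by
  set j := n.factorization 2 with hj
  have hcpos : 0 < c := by
    rcases Nat.eq_zero_or_pos c with h | h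
    · rw [h] at ho; simp [Nat.odd_iff] at ho
    · exact h
  set g := Nat.gcd c c' with hg
  have hgpos : 0 < g := Nat.gcd_pos_of_pos_left _ hcpos
  set u := c / g with hu
  set v := c' / g with hv
  have hcu : c = g * u := (Nat.mul_div_cancel' (Nat.gcd_dvd_left c c')).symm
  have hcv : c' = g * v := (Nat.mul_div_cancel' (Nat.gcd_dvd_right c c')).symm
  have hcop : Nat.Coprime u v := Nat.coprime_div_gcd_div_gcd hgpos
  have huv : u < v := by
    rw [hcu, hcv] at hlt
    exact lt_of_mul_lt_mul_left hlt (Nat.zero_le g)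
  have hupos : 0 < u := by
    rcases Nat.eq_zero_or_pos u with h | h
    · rw [h, mul_zero] at hcu; omega
    · exact h
  have hvub : v < 2 ^ (j + 1) * u := by
    rw [hcu, hcv] at hub
    have : g * v < g * (2 ^ (j + 1) * u) := by
      calc g * v < 2 ^ (j + 1) * (g * u) := hub
        _ = g * (2 ^ (j + 1) * u) := by ring
    exact lt_of_mul_lt_mul_left this (Nat.zero_le g)
  have hou : Odd u := by
    rcases Nat.even_or_odd u with he | hodd
    · exfalso
      have h2 : (2:ℕ) ∣ c := dvd_trans he.two_dvd (Dvd.intro_left g hcu.symm)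
      rw [Nat.odd_iff] at ho
      omega
    · exact hodd
  have hov : Odd v := by
    rcases Nat.even_or_odd v with he | hodd
    · exfalso
      have h2 : (2:ℕ) ∣ c' := dvd_trans he.two_dvd (Dvd.intro_left g hcv.symm)
      rw [Nat.odd_iff] at ho'
      omega
    · exact hodd
  have hun : u ∣ n := dvd_trans (Dvd.intro_left g hcu.symm) hc
  have hvn : v ∣ n := dvd_trans (Dvd.intro_left g hcv.symm) hc'
  have huvn : u * v ∣ n := Nat.Coprime.mul_dvd_of_dvd_of_dvd hcop hun hvn
  -- choose the right power of two
  set P : ℕ → Prop := fun i => 2 ^ i * u < v with hP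
  have hP0 : P 0 := by simpa [hP] using huv
  set i := Nat.findGreatest P (j + 1) with hi
  have hPi : P i := Nat.findGreatest_spec (Nat.zero_le _) hP0
  have hile : i ≤ j + 1 := Nat.findGreatest_le _
  have hij : i ≤ j := by
    rcases Nat.lt_or_ge i (j + 1) with h | h
    · omega
    · exfalso
      have : i = j + 1 := by omega
      rw [this] at hPi
      simp only [hP] at hPi
      omega
  have hnotP : ¬ P (i + 1) := by
    intro h
    have := Nat.le_findGreatest (by omega : i + 1 ≤ j + 1) h
    omega
  have hvle : v ≤ 2 ^ (i + 1) * u := by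
    simp only [hP] at hnotP
    omega
  have hvne : v ≠ 2 ^ (i + 1) * u := by
    intro h
    have : 2 ∣ v := by
      rw [h]
      exact dvd_mul_of_dvd_left (dvd_pow_self 2 (Nat.succ_ne_zero i)) u
    rw [Nat.odd_iff] at hov
    omega
  refine ⟨2 ^ i * u, v, by positivity, hPi,
    by have hdbl : 2 ^ (i + 1) * u = 2 * (2 ^ i * u) := by ring
       omega, ?_⟩
  have h1 : u * v ∣ n := huvn
  have h2 : 2 ^ j * (u * v) ∣ n := odd_dvd_ord hn huvn (hou.mul hov)
  calc 2 ^ i * u * v ∣ 2 ^ j * (u * v) := by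
        rw [mul_assoc]
        exact mul_dvd_mul (pow_dvd_pow 2 hij) dvd_rfl
    _ ∣ n := h2

lemma pair_of_hasMS {n : ℕ} (hn : n ≠ 0)
    (h : ∃ m s : ℕ, 0 < m ∧ m < s ∧ s < 2 * m ∧ m * s ∣ n) :
    ∃ c c' : ℕ, c ∣ n ∧ c' ∣ n ∧ Odd c ∧ Odd c' ∧ c < c' ∧
      c' < 2 ^ (n.factorization 2 + 1) * c := by
  obtain ⟨m, s, hm, hms, hs2, hdvd⟩ := h
  set j := n.factorization 2 with hj
  have hspos : 0 < s := lt_trans hm hms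
  set a := m.factorization 2 with ha
  set b := s.factorization 2 with hb
  set u := m / 2 ^ a with hu
  set v := s / 2 ^ b with hv
  have hmu : m = 2 ^ a * u := (Nat.ordProj_mul_ordCompl_eq_self m 2).symm
  have hsv : s = 2 ^ b * v := (Nat.ordProj_mul_ordCompl_eq_self s 2).symm
  have hou : Odd u := by
    rw [Nat.odd_iff, ← Nat.two_dvd_ne_zero]
    exact Nat.not_dvd_ordCompl Nat.prime_two (by omega)
  have hov : Odd v := by
    rw [Nat.odd_iff, ← Nat.two_dvd_ne_zero]
    exact Nat.not_dvd_ordCompl Nat.prime_two (by omega)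
  have hupos : 0 < u := by
    rcases Nat.eq_zero_or_pos u with h | h
    · rw [h, mul_zero] at hmu; omega
    · exact h
  have hvpos : 0 < v := by
    rcases Nat.eq_zero_or_pos v with h | h
    · rw [h, mul_zero] at hsv; omega
    · exact h
  have hun : u ∣ n := dvd_trans (Dvd.intro_left _ hmu.symm) (dvd_trans (dvd_mul_right m s) hdvd)
  have hvn : v ∣ n := dvd_trans (Dvd.intro_left _ hsv.symm) (dvd_trans (dvd_mul_left s m) hdvd)
  have habj : a + b ≤ j := by
    apply pow_le_factorization hn
    calc (2:ℕ) ^ (a + b) ∣ (2 ^ a * u) * (2 ^ b * v) := by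
          rw [pow_add]
          exact mul_dvd_mul (dvd_mul_right _ _) (dvd_mul_right _ _)
      _ = m * s := by rw [← hmu, ← hsv]
      _ ∣ n := hdvd
  have hne : u ≠ v := by
    intro h
    rw [hmu, hsv, h] at hms hs2
    have h1 : 2 ^ a < 2 ^ b := by
      by_contra hcon
      push_neg at hcon
      have := Nat.mul_le_mul_right v hcon
      omega
    have h2 : 2 ^ b < 2 ^ (a + 1) := by
      by_contra hcon
      push_neg at hcon
      have h5 := Nat.mul_le_mul_right v hcon
      have h6 : 2 ^ (a + 1) * v = 2 * (2 ^ a * v) := by ring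
      omega
    have hab1 : a < b := (Nat.pow_lt_pow_iff_right (by norm_num)).mp h1
    have hab2 : b < a + 1 := (Nat.pow_lt_pow_iff_right (by norm_num)).mp h2
    omega
  rcases Nat.lt_or_ge u v with hlt | hge
  · refine ⟨u, v, hun, hvn, hou, hov, hlt, ?_⟩
    -- v < 2^(j+1) u : from 2^b v = s < 2m = 2^(a+1) u
    have h1 : 2 ^ b * v < 2 ^ (a + 1) * u := by
      have hh : 2 ^ (a + 1) * u = 2 * (2 ^ a * u) := by ring
      rw [hh, ← hmu, ← hsv]
      exact hs2
    have h2 : v ≤ 2 ^ b * v := Nat.le_mul_of_pos_left v (by positivity)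
    have h3 : 2 ^ (a + 1) * u ≤ 2 ^ (j + 1) * u :=
      Nat.mul_le_mul_right u (Nat.pow_le_pow_right (by norm_num) (by omega))
    omega
  · have hlt : v < u := by omega
    refine ⟨v, u, hvn, hun, hov, hou, hlt, ?_⟩
    have h1 : 2 ^ a * u < 2 ^ b * v := by rw [← hmu, ← hsv]; exact hms
    have h2 : u ≤ 2 ^ a * u := Nat.le_mul_of_pos_left u (by positivity)
    have h3 : 2 ^ b * v ≤ 2 ^ j * v :=
      Nat.mul_le_mul_right v (Nat.pow_le_pow_right (by norm_num) (by omega))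
    have h4 : 2 ^ j * v < 2 ^ (j + 1) * v := by
      have : (2:ℕ) ^ j < 2 ^ (j + 1) := Nat.pow_lt_pow_succ (by norm_num)
      exact (Nat.mul_lt_mul_right hvpos).mpr this
    omega


lemma mem_divisorsR_iff {n : ℕ} {x : ℝ} :
    x ∈ divisorsR n ↔ ∃ d : ℕ, (d ∣ n ∧ ¬n = 0) ∧ (d : ℝ) = x := by
  simp [divisorsR]

lemma mem_lamDivisorsR {n : ℕ} {x : ℝ} :
    x ∈ lamDivisorsR 2 n ↔ ∃ d : ℕ, (d ∣ n ∧ ¬n = 0) ∧ 2 * (d : ℝ) = x := by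
  simp [lamDivisorsR]

lemma natCast_mem_divisorsR {n d : ℕ} (hn : n ≠ 0) :
    ((d : ℝ) ∈ divisorsR n) ↔ d ∣ n := by
  rw [mem_divisorsR_iff]
  constructor
  · rintro ⟨e, he, hee⟩
    have h2 : e = d := Nat.cast_injective hee
    rw [← h2]
    exact he.1
  · intro h
    exact ⟨d, ⟨h, hn⟩, rfl⟩

lemma mem_symmDiff_iff {n : ℕ} (hn : n ≠ 0) (x : ℝ) :
    x ∈ divisorsR n ∆ lamDivisorsR 2 n ↔
      ∃ c : ℕ, c ∣ n ∧ Odd c ∧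
        (x = (c : ℝ) ∨ x = ((2 ^ (n.factorization 2 + 1) * c : ℕ) : ℝ)) := by
  set j := n.factorization 2 with hj
  rw [Finset.mem_symmDiff]
  constructor
  · rintro (⟨hD, h2D⟩ | ⟨h2D, hD⟩)
    · rw [mem_divisorsR_iff] at hD
      obtain ⟨d, hd, rfl⟩ := hD
      refine ⟨d, hd.1, ?_, Or.inl rfl⟩
      rcases Nat.even_or_odd d with he | ho
      · exfalso
        obtain ⟨e, he⟩ := he
        apply h2D
        rw [mem_lamDivisorsR]
        refine ⟨e, ⟨dvd_trans ⟨2, by omega⟩ hd.1, hn⟩, ?_⟩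
        push_cast [he]
        ring
      · exact ho
    · rw [mem_lamDivisorsR] at h2D
      obtain ⟨d, hd, rfl⟩ := h2D
      have hdpos : 0 < d := Nat.pos_of_dvd_of_pos hd.1 (Nat.pos_of_ne_zero hn)
      set a := d.factorization 2 with ha
      set u := d / 2 ^ a with hu
      have hdu : d = 2 ^ a * u := (Nat.ordProj_mul_ordCompl_eq_self d 2).symm
      have hou : Odd u := by
        rw [Nat.odd_iff, ← Nat.two_dvd_ne_zero]
        exact Nat.not_dvd_ordCompl Nat.prime_two (by omega)
      have hun : u ∣ n := dvd_trans (Dvd.intro_left _ hdu.symm) hd.1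
      have haj : a ≤ j := pow_le_factorization hn (dvd_trans (Dvd.intro _ hdu.symm) hd.1)
      have haeq : a = j := by
        by_contra hne
        have haj' : a + 1 ≤ j := by omega
        have h2d : 2 * d ∣ n := by
          have h1 : 2 ^ j * u ∣ n := odd_dvd_ord hn hun hou
          calc 2 * d = 2 ^ (a + 1) * u := by rw [hdu]; ring
            _ ∣ 2 ^ j * u := mul_dvd_mul (pow_dvd_pow 2 haj') dvd_rfl
            _ ∣ n := h1
        apply hD
        have : (2 : ℝ) * d = ((2 * d : ℕ) : ℝ) := by push_cast; ring
        rw [this, natCast_mem_divisorsR hn]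
        exact h2d
      refine ⟨u, hun, hou, Or.inr ?_⟩
      push_cast
      rw [hdu, haeq]
      push_cast
      ring
  · rintro ⟨c, hc, ho, rfl | rfl⟩
    · left
      constructor
      · rw [natCast_mem_divisorsR hn]; exact hc
      · rw [mem_lamDivisorsR]
        rintro ⟨e, he, hce⟩
        have : ((2 * e : ℕ) : ℝ) = (c : ℝ) := by push_cast; linarith
        have h2 : 2 * e = c := Nat.cast_injective.eq_iff.mp this
        rw [Nat.odd_iff] at ho
        omega
    · right
      constructor
      · rw [mem_lamDivisorsR]
        refine ⟨2 ^ j * c, ⟨odd_dvd_ord hn hc ho, hn⟩, ?_⟩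
        push_cast
        ring
      · rw [natCast_mem_divisorsR hn]
        exact not_dvd_pow_succ hn c

lemma chain'_flatMap_pair (f g : ℕ → ℕ) :
    ∀ l : List ℕ, l.IsChain (· < ·) → (∀ c ∈ l, f c < g c) →
      (∀ c c' : ℕ, c ∈ l → c' ∈ l → c < c' → g c < f c') →
      (l.flatMap (fun c => [f c, g c])).IsChain (· < ·) := by
  intro l
  induction l with
  | nil => intro _ _ _; simp
  | cons c t ih =>
    intro hch h1 h2
    rw [List.flatMap_cons]
    have hrest : (t.flatMap fun c => [f c, g c]).IsChain (· < ·) :=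
      ih hch.tail (fun a ha => h1 a (by simp [ha]))
        (fun a b ha hb hab => h2 a b (by simp [ha]) (by simp [hb]) hab)
    have hfg : f c < g c := h1 c (by simp)
    rcases t with _ | ⟨c', t'⟩
    · simp [hfg]
    · have hcc' : c < c' := (List.isChain_cons_cons.mp hch).1
      have hgf : g c < f c' := h2 c c' (by simp) (by simp) hcc'
      rw [List.flatMap_cons] at hrest ⊢
      exact List.isChain_cons_cons.mpr ⟨hfg, List.isChain_cons_cons.mpr ⟨hgf, hrest⟩⟩

lemma sort_symmDiff {n : ℕ} (hn : n ≠ 0) (hQ : QQ n) :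
    (divisorsR n ∆ lamDivisorsR 2 n).sort (· ≤ ·)
      = ((n.divisors.filter (fun d => Odd d)).sort (· ≤ ·)).flatMap
          (fun (c : ℕ) => [(c : ℝ), ((2 ^ (n.factorization 2 + 1) * c : ℕ) : ℝ)]) := by
  set j := n.factorization 2 with hj
  set A := n.divisors.filter (fun d => Odd d) with hA
  set cs := A.sort (· ≤ ·) with hcs
  have hmemA : ∀ c, c ∈ cs ↔ c ∣ n ∧ Odd c := by
    intro c
    rw [hcs, Finset.mem_sort, hA, Finset.mem_filter, Nat.mem_divisors]
    tauto
  -- the ℕ-level list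
  set LN : List ℕ := cs.flatMap (fun c => [c, 2 ^ (j + 1) * c]) with hLN
  have hchainN : LN.IsChain (· < ·) := by
    apply chain'_flatMap_pair
    · exact List.isChain_iff_pairwise.mpr (Finset.sortedLT_sort A).pairwise
    · intro c hc
      have hcpos : 0 < c := Nat.pos_of_dvd_of_pos ((hmemA c).mp hc).1 (Nat.pos_of_ne_zero hn)
      calc c = 1 * c := (one_mul c).symm
        _ < 2 ^ (j + 1) * c := by
            apply Nat.mul_lt_mul_right hcpos |>.mpr
            exact Nat.one_lt_two_pow (by omega)
    · intro c c' hc hc' hlt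
      obtain ⟨h1, h2⟩ := (hmemA c).mp hc
      obtain ⟨h3, h4⟩ := (hmemA c').mp hc'
      exact hQ c c' h1 h3 h2 h4 hlt
  set L : List ℝ := LN.map (fun c : ℕ => (c : ℝ)) with hL
  have hchain : L.IsChain (· < ·) := by
    rw [hL, List.isChain_map]
    exact hchainN.imp (fun a b h => Nat.cast_lt.mpr h)
  have hpw : L.Pairwise (· < ·) := List.isChain_iff_pairwise.mp hchain
  have hsorted : L.Pairwise (· ≤ ·) := hpw.imp le_of_lt
  have hnodup : L.Nodup := hpw.imp ne_of_lt
  have htofin : L.toFinset = divisorsR n ∆ lamDivisorsR 2 n := by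
    ext x
    rw [List.mem_toFinset, mem_symmDiff_iff hn x, hL, List.mem_map]
    constructor
    · rintro ⟨y, hy, rfl⟩
      rw [hLN, List.mem_flatMap] at hy
      obtain ⟨c, hc, hyc⟩ := hy
      obtain ⟨h1, h2⟩ := (hmemA c).mp hc
      simp only [List.mem_cons, List.mem_singleton, List.not_mem_nil, or_false] at hyc
      rcases hyc with h | h
      · exact ⟨c, h1, h2, Or.inl (by rw [h])⟩
      · exact ⟨c, h1, h2, Or.inr (by rw [h])⟩
    · rintro ⟨c, h1, h2, hx | hx⟩
      · exact ⟨c, by rw [hLN, List.mem_flatMap]; exact ⟨c, (hmemA c).mpr ⟨h1, h2⟩, by simp⟩, hx.symm⟩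
      · exact ⟨2 ^ (j + 1) * c,
          by rw [hLN, List.mem_flatMap]; exact ⟨c, (hmemA c).mpr ⟨h1, h2⟩, by simp⟩, hx.symm⟩
  have hfinal : (divisorsR n ∆ lamDivisorsR 2 n).sort (· ≤ ·) = L := by
    rw [← htofin]
    exact (List.toFinset_sort (· ≤ ·) hnodup).mpr hsorted
  rw [hfinal, hL, hLN, List.map_flatMap]
  simp

lemma krWord_of_QQ {n : ℕ} (hn : n ≠ 0) (hQ : QQ n) :
    krWord 2 n = (List.replicate ((n.divisors.filter (fun d => Odd d)).card)
      [true, false]).flatten := by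
  set j := n.factorization 2 with hj
  set A := n.divisors.filter (fun d => Odd d) with hA
  set cs := A.sort (· ≤ ·) with hcs
  rw [krWord, sort_symmDiff hn hQ, List.map_flatMap]
  have hcong : ∀ c ∈ cs, (List.map (fun x => decide (x ∈ divisorsR n))
      [(c : ℝ), ((2 ^ (j + 1) * c : ℕ) : ℝ)]) = [true, false] := by
    intro c hc
    rw [hcs, Finset.mem_sort, hA, Finset.mem_filter, Nat.mem_divisors] at hc
    have ht : decide ((c : ℝ) ∈ divisorsR n) = true :=
      decide_eq_true ((natCast_mem_divisorsR hn).mpr hc.1.1)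
    have hf : decide (((2 ^ (j + 1) * c : ℕ) : ℝ) ∈ divisorsR n) = false :=
      decide_eq_false (by rw [natCast_mem_divisorsR hn]; exact not_dvd_pow_succ hn c)
    rw [List.map_cons, List.map_cons, List.map_nil, ht, hf]
  rw [List.flatMap_congr hcong]
  have h2 : cs.flatMap (fun _ => [true, false])
      = (cs.map (fun _ => [true, false])).flatten := rfl
  rw [h2]
  have h3 : cs.map (fun _ => [true, false]) = List.replicate cs.length [true, false] := by
    simp [List.map_const']
  rw [h3, hcs, Finset.length_sort]

lemma count_prefix_ab :
    ∀ (k : ℕ) (p : List Bool), p <+: (List.replicate k [true, false]).flatten →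
      p.count true ≤ p.count false + 1 := by
  intro k
  induction k with
  | zero =>
    intro p hp
    simp only [List.replicate_zero, List.flatten_nil] at hp
    rw [List.prefix_nil.mp hp]
    simp
  | succ m ih =>
    intro p hp
    rw [List.replicate_succ, List.flatten_cons] at hp
    rcases p with _ | ⟨b, p⟩
    · simp
    · have hp' : b = true ∧ p <+: false :: (List.replicate m [true, false]).flatten :=
        List.cons_prefix_cons.mp hp
      obtain ⟨rfl, hp2⟩ := hp'
      rcases p with _ | ⟨b2, p⟩
      · simp
      · obtain ⟨rfl, hp3⟩ := List.cons_prefix_cons.mp hp2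
        have := ih p hp3
        simp only [List.count_cons]
        simp
        omega

lemma takeWhile_eq_filter_of_sorted {l : List ℝ} (hs : l.Pairwise (· ≤ ·)) (y : ℝ) :
    l.takeWhile (fun x => decide (x ≤ y)) = l.filter (fun x => decide (x ≤ y)) := by
  induction l with
  | nil => simp
  | cons a t ih =>
    rw [List.takeWhile_cons, List.filter_cons]
    by_cases h : a ≤ y
    · have hd : decide (a ≤ y) = true := decide_eq_true h
      simp only [hd, if_true]
      rw [ih hs.of_cons]
    · have hd : decide (a ≤ y) = false := decide_eq_false h
      have hnil : t.filter (fun x => decide (x ≤ y)) = [] := by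
        rw [List.filter_eq_nil_iff]
        intro x hx
        simp only [decide_eq_true_eq]
        intro hxy
        exact h (le_trans (List.rel_of_pairwise_cons hs hx) hxy)
      simp [hd, hnil]

lemma countP_sort (s : Finset ℝ) (q : ℝ → Bool) :
    (s.sort (· ≤ ·)).countP q = (s.filter (fun x => q x = true)).card := by
  have h1 : (Finset.filter (fun x => q x = true) s).card
      = Multiset.countP (fun x => q x = true) s.val := by
    rw [Finset.card, Finset.filter_val, Multiset.countP_eq_card_filter]
  rw [h1, ← Finset.sort_eq s (· ≤ ·), Multiset.coe_countP]
  apply List.countP_congr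
  intro x _
  cases h : q x <;> simp [h]

lemma count_true_map (l : List ℝ) (f : ℝ → Bool) : (l.map f).count true = l.countP f := by
  induction l with
  | nil => simp
  | cons a t ih =>
    rw [List.map_cons, List.count_cons, List.countP_cons, ih]
    cases h : f a <;> simp [h]

lemma count_false_map (l : List ℝ) (f : ℝ → Bool) :
    (l.map f).count false = l.countP (fun x => !f x) := by
  induction l with
  | nil => simp
  | cons a t ih =>
    rw [List.map_cons, List.count_cons, List.countP_cons, ih]
    cases h : f a <;> simp [h]

lemma countP_filter' (l : List ℝ) (p q : ℝ → Bool) :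
    (l.filter q).countP p = l.countP (fun x => p x && q x) := by
  induction l with
  | nil => simp
  | cons a t ih =>
    cases hq : q a <;> simp [List.filter_cons, hq, List.countP_cons, ih]

lemma QQ_of_krWord {n : ℕ} (hn : n ≠ 0) {k : ℕ}
    (hw : krWord 2 n = (List.replicate k [true, false]).flatten) : QQ n := by
  intro c c' hc hc' ho ho' hlt
  by_contra hcon
  push_neg at hcon
  set j := n.factorization 2 with hj
  set S := divisorsR n ∆ lamDivisorsR 2 n with hS
  set L := S.sort (· ≤ ·) with hL
  have hc'pos : 0 < c' := Nat.pos_of_dvd_of_pos hc' (Nat.pos_of_ne_zero hn)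
  have hcpos : 0 < c := Nat.pos_of_dvd_of_pos hc (Nat.pos_of_ne_zero hn)
  -- the prefix of the word consisting of letters with value ≤ c'
  have hpre : ((L.takeWhile (fun x => decide (x ≤ (c' : ℝ)))).map
      (fun x => decide (x ∈ divisorsR n))) <+: krWord 2 n := by
    rw [krWord]
    exact (List.takeWhile_prefix _).map _
  rw [hw] at hpre
  have hcount := count_prefix_ab k _ hpre
  rw [takeWhile_eq_filter_of_sorted (Finset.pairwise_sort _ _) _] at hcount
  rw [count_true_map, count_false_map, countP_filter', countP_filter'] at hcount
  have hptA : (fun x : ℝ => decide (x ∈ divisorsR n) && decide (x ≤ (c' : ℝ)))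
      = (fun x : ℝ => decide (x ∈ divisorsR n ∧ x ≤ (c' : ℝ))) := by
    funext x
    by_cases h1 : x ∈ divisorsR n <;> by_cases h2 : x ≤ (c' : ℝ) <;> simp [h1, h2]
  have hptB : (fun x : ℝ => !decide (x ∈ divisorsR n) && decide (x ≤ (c' : ℝ)))
      = (fun x : ℝ => decide (¬(x ∈ divisorsR n) ∧ x ≤ (c' : ℝ))) := by
    funext x
    by_cases h1 : x ∈ divisorsR n <;> by_cases h2 : x ≤ (c' : ℝ) <;> simp [h1, h2]
  rw [hptA, hptB, countP_sort, countP_sort] at hcount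
  have hsetA : S.filter (fun x => decide (x ∈ divisorsR n ∧ x ≤ (c' : ℝ)) = true)
      = S.filter (fun x => x ∈ divisorsR n ∧ x ≤ (c' : ℝ)) := by
    apply Finset.filter_congr
    intro x _
    simp
  have hsetB : S.filter (fun x => decide (¬(x ∈ divisorsR n) ∧ x ≤ (c' : ℝ)) = true)
      = S.filter (fun x => ¬(x ∈ divisorsR n) ∧ x ≤ (c' : ℝ)) := by
    apply Finset.filter_congr
    intro x _
    simp
  rw [hsetA, hsetB] at hcount
  -- identify the two filtered sets
  set X := n.divisors.filter (fun d => Odd d ∧ d ≤ c') with hX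
  set Y := n.divisors.filter (fun e => Odd e ∧ 2 ^ (j + 1) * e ≤ c') with hY
  have hAimg : S.filter (fun x => x ∈ divisorsR n ∧ x ≤ (c' : ℝ))
      = X.image (fun d : ℕ => (d : ℝ)) := by
    ext x
    rw [Finset.mem_filter, Finset.mem_image]
    constructor
    · rintro ⟨hxS, hxD, hxle⟩
      rw [hS, mem_symmDiff_iff hn] at hxS
      obtain ⟨e, he, hoe, rfl | rfl⟩ := hxS
      · refine ⟨e, ?_, rfl⟩
        rw [hX, Finset.mem_filter, Nat.mem_divisors]
        exact ⟨⟨he, hn⟩, hoe, Nat.cast_le.mp hxle⟩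
      · exfalso
        rw [natCast_mem_divisorsR hn] at hxD
        exact not_dvd_pow_succ hn e hxD
    · rintro ⟨d, hd, rfl⟩
      rw [hX, Finset.mem_filter, Nat.mem_divisors] at hd
      refine ⟨?_, ?_, ?_⟩
      · rw [hS, mem_symmDiff_iff hn]
        exact ⟨d, hd.1.1, hd.2.1, Or.inl rfl⟩
      · rw [natCast_mem_divisorsR hn]; exact hd.1.1
      · exact Nat.cast_le.mpr hd.2.2
  have hBimg : S.filter (fun x => ¬(x ∈ divisorsR n) ∧ x ≤ (c' : ℝ))
      = Y.image (fun e => ((2 ^ (j + 1) * e : ℕ) : ℝ)) := by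
    ext x
    rw [Finset.mem_filter, Finset.mem_image]
    constructor
    · rintro ⟨hxS, hxD, hxle⟩
      rw [hS, mem_symmDiff_iff hn] at hxS
      obtain ⟨e, he, hoe, rfl | rfl⟩ := hxS
      · exfalso
        exact hxD ((natCast_mem_divisorsR hn).mpr he)
      · refine ⟨e, ?_, rfl⟩
        rw [hY, Finset.mem_filter, Nat.mem_divisors]
        exact ⟨⟨he, hn⟩, hoe, Nat.cast_le.mp hxle⟩
    · rintro ⟨e, he, rfl⟩
      rw [hY, Finset.mem_filter, Nat.mem_divisors] at he
      refine ⟨?_, ?_, ?_⟩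
      · rw [hS, mem_symmDiff_iff hn]
        exact ⟨e, he.1.1, he.2.1, Or.inr rfl⟩
      · rw [natCast_mem_divisorsR hn]
        exact not_dvd_pow_succ hn e
      · exact Nat.cast_le.mpr he.2.2
  rw [hAimg, hBimg] at hcount
  rw [Finset.card_image_of_injective _ Nat.cast_injective] at hcount
  have hinjB : Function.Injective (fun e : ℕ => ((2 ^ (j + 1) * e : ℕ) : ℝ)) := by
    intro a b hab
    have h1 : 2 ^ (j + 1) * a = 2 ^ (j + 1) * b := Nat.cast_injective hab
    exact Nat.eq_of_mul_eq_mul_left (by positivity) h1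
  rw [Finset.card_image_of_injective _ hinjB] at hcount
  -- now the combinatorial contradiction
  have hcY : c ∉ Y := by
    rw [hY, Finset.mem_filter]
    rintro ⟨-, -, hle⟩
    have heq : c' = 2 ^ (j + 1) * c := le_antisymm hcon hle
    have h2 : 2 ∣ c' := by
      rw [heq]
      exact dvd_mul_of_dvd_left (dvd_pow_self 2 (Nat.succ_ne_zero j)) c
    rw [Nat.odd_iff] at ho'
    omega
  have hc'Y : c' ∉ Y := by
    rw [hY, Finset.mem_filter]
    rintro ⟨-, -, hle⟩
    have h1 : c' < 2 ^ (j + 1) * c' := by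
      calc c' = 1 * c' := (one_mul c').symm
        _ < 2 ^ (j + 1) * c' := by
            apply (Nat.mul_lt_mul_right hc'pos).mpr
            exact Nat.one_lt_two_pow (by omega)
    omega
  have hsub : insert c (insert c' Y) ⊆ X := by
    intro e he
    rw [Finset.mem_insert, Finset.mem_insert] at he
    rw [hX, Finset.mem_filter, Nat.mem_divisors]
    rcases he with rfl | rfl | he
    · exact ⟨⟨hc, hn⟩, ho, le_of_lt hlt⟩
    · exact ⟨⟨hc', hn⟩, ho', le_refl _⟩
    · rw [hY, Finset.mem_filter, Nat.mem_divisors] at he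
      refine ⟨he.1, he.2.1, ?_⟩
      have h1 : e ≤ 2 ^ (j + 1) * e := Nat.le_mul_of_pos_left e (by positivity)
      omega
  have hcard : Y.card + 2 ≤ X.card := by
    have h1 : (insert c (insert c' Y)).card = Y.card + 2 := by
      rw [Finset.card_insert_of_notMem (by
        rw [Finset.mem_insert]
        rintro (rfl | h)
        · omega
        · exact hcY h)]
      rw [Finset.card_insert_of_notMem hc'Y]
    rw [← h1]
    exact Finset.card_le_card hsub
  omega


end KRAux

set_option maxHeartbeats 1000000 in
/-- `n` is not the semi-perimeter of a Pythagorean triangle iff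
`⟨⟨n⟩⟩₂ ∈ (ab)*`. -/
theorem not_semiperimeter_iff_krWord_in_ab_star (n : ℕ) (hn : 1 ≤ n) :
    ¬ IsPythSemiPerimeter n ↔ ∃ k : ℕ, krWord 2 n = (List.replicate k [true, false]).flatten := by
  have hn0 : n ≠ 0 := by omega
  constructor
  · intro hnp
    refine ⟨(n.divisors.filter (fun d => Odd d)).card, krWord_of_QQ hn0 ?_⟩
    intro c c' h1 h2 h3 h4 h5
    by_contra hcon
    push_neg at hcon
    have hcon' : c' < 2 ^ (n.factorization 2 + 1) * c := by
      rcases Nat.lt_or_ge c' (2 ^ (n.factorization 2 + 1) * c) with h | h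
      · exact h
      · have heq : c' = 2 ^ (n.factorization 2 + 1) * c := le_antisymm hcon h
        exfalso
        have h2d : 2 ∣ c' := by
          rw [heq]
          exact dvd_mul_of_dvd_left (dvd_pow_self 2 (Nat.succ_ne_zero _)) c
        rw [Nat.odd_iff] at h4
        omega
    exact hnp ((pyth_iff_hasMS hn0).mpr
      (hasMS_of_pair hn0 h1 h2 h3 h4 h5 hcon'))
  · rintro ⟨k, hk⟩ hp
    obtain ⟨cc, cc', h1, h2, h3, h4, h5, h6⟩ :=
      pair_of_hasMS hn0 ((pyth_iff_hasMS hn0).mp hp)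
    have := QQ_of_krWord hn0 hk cc cc' h1 h2 h3 h4 h5
    omega
end

section
/- For every integer n ≥ 1 and every real number λ > 1, the height of the Dyck path ⟨⟨n⟩⟩_λ equals the largest integer h such that there exist h divisors d_1 < d_2 < ... < d_h of n satisfying d_h < λ·d_1. -/
open scoped Classical symmDiff

noncomputable def Cset (l : ℝ) (n : ℕ) (t : ℝ) : Finset ℕ :=
  n.divisors.filter (fun d : ℕ => (d : ℝ) ≤ t ∧ ¬ (l * d ≤ t))

lemma divisorsR_eq (n : ℕ) : divisorsR n = n.divisors.image (fun d : ℕ => (d : ℝ)) := by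
  ext x; simp [divisorsR]

lemma lamDivisorsR_eq (l : ℝ) (n : ℕ) :
    lamDivisorsR l n = n.divisors.image (fun d : ℕ => l * (d : ℝ)) := by
  ext x; simp [lamDivisorsR]

lemma myCountP_sort (S : Finset ℝ) (p : ℝ → Prop) [DecidablePred p] :
    ((S.sort (· ≤ ·)).countP (fun x => decide (p x))) = (S.filter p).card := by
  rw [List.Perm.countP_eq _ (Finset.sort_perm_toList (s := S) (r := (· ≤ ·)))]
  rw [← Multiset.coe_countP, Finset.coe_toList, Multiset.countP_eq_card_filter]
  rw [Finset.card, Finset.filter_val]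

lemma prefix_count (n : ℕ) (hn : 1 ≤ n) (l : ℝ) (hl : 1 < l) (t : ℝ) :
    (((divisorsR n ∆ lamDivisorsR l n).sort (· ≤ ·)).filter (fun x => decide (x ≤ t))).countP
        (fun x => decide (x ∈ divisorsR n))
      = (((divisorsR n ∆ lamDivisorsR l n).sort (· ≤ ·)).filter (fun x => decide (x ≤ t))).countP
        (fun x => decide (x ∉ divisorsR n)) + (Cset l n t).card := by
  set D := divisorsR n with hD
  set L := lamDivisorsR l n with hL
  have e1 : (((D ∆ L).sort (· ≤ ·)).filter (fun x => decide (x ≤ t))).countP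
      (fun x => decide (x ∈ D)) = ((D ∆ L).filter (fun x => x ∈ D ∧ x ≤ t)).card := by
    rw [List.countP_filter, ← myCountP_sort (D ∆ L) (fun x => x ∈ D ∧ x ≤ t)]
    apply List.countP_congr
    intro a _
    simp
  have e2 : (((D ∆ L).sort (· ≤ ·)).filter (fun x => decide (x ≤ t))).countP
      (fun x => decide (x ∉ D)) = ((D ∆ L).filter (fun x => x ∉ D ∧ x ≤ t)).card := by
    rw [List.countP_filter, ← myCountP_sort (D ∆ L) (fun x => x ∉ D ∧ x ≤ t)]
    apply List.countP_congr
    intro a _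
    simp
  rw [e1, e2]
  have A1 : (D ∆ L).filter (fun x => x ∈ D ∧ x ≤ t) = (D \ L).filter (fun x => x ≤ t) := by
    ext x
    simp only [Finset.mem_filter, Finset.mem_symmDiff, Finset.mem_sdiff]
    tauto
  have A2 : (D ∆ L).filter (fun x => x ∉ D ∧ x ≤ t) = (L \ D).filter (fun x => x ≤ t) := by
    ext x
    simp only [Finset.mem_filter, Finset.mem_symmDiff, Finset.mem_sdiff]
    tauto
  rw [A1, A2]
  have cardD : (D.filter (fun x => x ≤ t)).card
      = ((D \ L).filter (fun x => x ≤ t)).card + ((D ∩ L).filter (fun x => x ≤ t)).card := by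
    rw [← Finset.card_union_of_disjoint
      (Finset.disjoint_filter_filter (Finset.disjoint_sdiff_inter D L)),
      ← Finset.filter_union, Finset.sdiff_union_inter]
  have cardL : (L.filter (fun x => x ≤ t)).card
      = ((L \ D).filter (fun x => x ≤ t)).card + ((D ∩ L).filter (fun x => x ≤ t)).card := by
    rw [Finset.inter_comm, ← Finset.card_union_of_disjoint
      (Finset.disjoint_filter_filter (Finset.disjoint_sdiff_inter L D)),
      ← Finset.filter_union, Finset.sdiff_union_inter]
  have hl0 : (0:ℝ) < l := lt_trans one_pos hl
  have AD : (D.filter (fun x => x ≤ t)).card = (n.divisors.filter (fun d : ℕ => (d:ℝ) ≤ t)).card := by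
    rw [hD, divisorsR_eq, Finset.filter_image, Finset.card_image_of_injective _ Nat.cast_injective]
  have AL : (L.filter (fun x => x ≤ t)).card = (n.divisors.filter (fun d : ℕ => l * d ≤ t)).card := by
    rw [hL, lamDivisorsR_eq, Finset.filter_image, Finset.card_image_of_injective]
    intro a b hab
    have hab' : l * (a:ℝ) = l * (b:ℝ) := hab
    exact Nat.cast_injective (mul_left_cancel₀ (ne_of_gt hl0) hab')
  have BC : (n.divisors.filter (fun d : ℕ => (d:ℝ) ≤ t)).card
      = (n.divisors.filter (fun d : ℕ => l * d ≤ t)).card + (Cset l n t).card := by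
    have hsplit : n.divisors.filter (fun d : ℕ => (d:ℝ) ≤ t)
        = n.divisors.filter (fun d : ℕ => l * d ≤ t) ∪ Cset l n t := by
      ext d
      simp only [Cset, Finset.mem_union, Finset.mem_filter]
      constructor
      · rintro ⟨hd, hdt⟩
        by_cases hldt : l * d ≤ t
        · exact Or.inl ⟨hd, hldt⟩
        · exact Or.inr ⟨hd, hdt, hldt⟩
      · rintro (⟨hd, hldt⟩ | ⟨hd, hdt, _⟩)
        · refine ⟨hd, le_trans ?_ hldt⟩
          exact le_mul_of_one_le_left (Nat.cast_nonneg d) (le_of_lt hl)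
        · exact ⟨hd, hdt⟩
    rw [hsplit, Finset.card_union_of_disjoint]
    rw [Finset.disjoint_left]
    intro d hd1 hd2
    simp only [Cset, Finset.mem_filter] at hd1 hd2
    exact hd2.2.2 hd1.2
  omega

lemma take_count_eq (n : ℕ) (hn : 1 ≤ n) (l : ℝ) (hl : 1 < l) (t : ℝ) (i : ℕ)
    (hi : ((divisorsR n ∆ lamDivisorsR l n).sort (· ≤ ·)).take i
        = ((divisorsR n ∆ lamDivisorsR l n).sort (· ≤ ·)).filter (fun x => decide (x ≤ t))) :
    ((krWord l n).take i).count true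
      = ((krWord l n).take i).count false + (Cset l n t).card := by
  have hw : (krWord l n).take i
      = (((divisorsR n ∆ lamDivisorsR l n).sort (· ≤ ·)).filter (fun x => decide (x ≤ t))).map
          (fun x => decide (x ∈ divisorsR n)) := by
    rw [krWord, ← List.map_take, hi]
  rw [hw]
  have h1 : ∀ (Q : List ℝ), (Q.map (fun x => decide (x ∈ divisorsR n))).count true
      = Q.countP (fun x => decide (x ∈ divisorsR n)) := by
    intro Q
    rw [List.count_eq_countP, List.countP_map]
    apply List.countP_congr
    intro x _
    simp
  have h2 : ∀ (Q : List ℝ), (Q.map (fun x => decide (x ∈ divisorsR n))).count false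
      = Q.countP (fun x => decide (x ∉ divisorsR n)) := by
    intro Q
    rw [List.count_eq_countP, List.countP_map]
    apply List.countP_congr
    intro x _
    simp
  rw [h1, h2]
  exact prefix_count n hn l hl t

lemma mySorted_filter_le_prefix {L : List ℝ} (h : L.Pairwise (· ≤ ·)) (t : ℝ) :
    L.filter (fun x => decide (x ≤ t)) <+: L := by
  induction L with
  | nil => simp
  | cons a L ih =>
    rcases List.pairwise_cons.mp h with ⟨ha, hL⟩
    by_cases hat : a ≤ t
    · rcases ih hL with ⟨r, hr⟩
      exact ⟨r, by simp [List.filter_cons, hat, hr]⟩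
    · have h0 : L.filter (fun x => decide (x ≤ t)) = [] := by
        rw [List.filter_eq_nil_iff]
        intro x hx
        simp only [decide_eq_true_eq]
        exact fun hxt => hat (le_trans (ha x hx) hxt)
      simp [List.filter_cons, hat, h0]

lemma myTake_eq_filter {L : List ℝ} (h : L.Pairwise (· < ·)) {i : ℕ} (hi : i ≤ L.length)
    (h0 : 0 < i) (t : ℝ) (ht : L[i-1]'(by omega) = t) :
    L.take i = L.filter (fun x => decide (x ≤ t)) := by
  have hstep : ∀ (j k : ℕ) (hj : j < L.length) (hk : k < L.length), j ≤ k → L[j] ≤ L[k] := by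
    intro j k hj hk hjk
    have := h.sortedLT.strictMono_get.monotone (show (⟨j, hj⟩ : Fin L.length) ≤ ⟨k, hk⟩ from hjk)
    simpa using this
  conv_rhs => rw [← List.take_append_drop i L]
  rw [List.filter_append]
  have h1 : (L.take i).filter (fun x => decide (x ≤ t)) = L.take i := by
    rw [List.filter_eq_self]
    intro x hx
    obtain ⟨j, hj, rfl⟩ := List.mem_iff_getElem.mp hx
    rw [List.getElem_take]
    simp only [decide_eq_true_eq]
    rw [← ht]
    exact hstep _ _ _ _ (by simp at hj; omega)
  have h2 : (L.drop i).filter (fun x => decide (x ≤ t)) = [] := by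
    rw [List.filter_eq_nil_iff]
    intro x hx
    obtain ⟨j, hj, rfl⟩ := List.mem_iff_getElem.mp hx
    rw [List.getElem_drop]
    simp only [decide_eq_true_eq, not_le]
    rw [← ht]
    exact h.sortedLT.strictMono_get
      (show (⟨i-1, by omega⟩ : Fin L.length) < ⟨i+j, by simp at hj; omega⟩ from by simp; omega)
  rw [h1, h2, List.append_nil]

/-- The height of the Dyck path `⟨⟨n⟩⟩_λ` is the greatest `h` such that there
are divisors `d₁ < d₂ < ⋯ < d_h` of `n` all lying in an interval `[d₁, λ·d₁)`,
i.e. with `d_h < λ·d₁` (equivalently, `d j < λ·d i` for all `i, j`). -/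
theorem wordHeight_krWord_isGreatest (n : ℕ) (hn : 1 ≤ n) (l : ℝ) (hl : 1 < l) :
    IsGreatest {h : ℕ | ∃ d : Fin h → ℕ, StrictMono d ∧ (∀ i, d i ∣ n) ∧
      ∀ i j, (d j : ℝ) < l * (d i : ℝ)} (wordHeight (krWord l n)) := by
  have hws : (krWord l n).length = ((divisorsR n ∆ lamDivisorsR l n).sort (· ≤ ·)).length :=
    List.length_map _
  have key1 : ∀ t : ℝ, (Cset l n t).card ≤ wordHeight (krWord l n) := by
    intro t
    have hpre := mySorted_filter_le_prefix
      (Finset.pairwise_sort (r := (· ≤ ·)) (s := divisorsR n ∆ lamDivisorsR l n)) t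
    have htake : ((divisorsR n ∆ lamDivisorsR l n).sort (· ≤ ·)).take
        ((((divisorsR n ∆ lamDivisorsR l n).sort (· ≤ ·)).filter (fun x => decide (x ≤ t))).length)
        = ((divisorsR n ∆ lamDivisorsR l n).sort (· ≤ ·)).filter (fun x => decide (x ≤ t)) :=
      (List.prefix_iff_eq_take.mp hpre).symm
    set i := ((((divisorsR n ∆ lamDivisorsR l n).sort (· ≤ ·)).filter
      (fun x => decide (x ≤ t))).length) with hidef
    have hcount := take_count_eq n hn l hl t i htake
    have hile : i ≤ (krWord l n).length := by rw [hws]; exact hpre.length_le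
    have hle : ((krWord l n).take i).count true - ((krWord l n).take i).count false
        ≤ wordHeight (krWord l n) :=
      Finset.le_sup (f := fun i => ((krWord l n).take i).count true
        - ((krWord l n).take i).count false) (by rw [Finset.mem_range]; omega)
    omega
  constructor
  · -- membership
    by_cases h0 : wordHeight (krWord l n) = 0
    · rw [Set.mem_setOf_eq, h0]
      exact ⟨Fin.elim0, fun a => a.elim0, fun a => a.elim0, fun a => a.elim0⟩
    · obtain ⟨i, hi_mem, hsup⟩ := Finset.exists_mem_eq_sup
        (Finset.range ((krWord l n).length + 1)) ⟨0, by simp⟩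
        (fun i => ((krWord l n).take i).count true - ((krWord l n).take i).count false)
      have hw0 : wordHeight (krWord l n)
          = ((krWord l n).take i).count true - ((krWord l n).take i).count false := hsup
      have hi0 : 0 < i := by
        rcases Nat.eq_zero_or_pos i with h | h
        · subst h; simp at hw0; exact absurd hw0 h0
        · exact h
      rw [Finset.mem_range] at hi_mem
      have hilen : i ≤ ((divisorsR n ∆ lamDivisorsR l n).sort (· ≤ ·)).length := by omega
      set t := (((divisorsR n ∆ lamDivisorsR l n).sort (· ≤ ·))[i-1]'(by omega) : ℝ) with ht
      have htake := myTake_eq_filter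
        (Finset.sortedLT_sort (divisorsR n ∆ lamDivisorsR l n)).pairwise hilen hi0 t rfl
      have hcount := take_count_eq n hn l hl t i htake
      have hH : (Cset l n t).card = wordHeight (krWord l n) := by omega
      refine ⟨fun j => (Cset l n t).orderEmbOfFin hH j,
        ((Cset l n t).orderEmbOfFin hH).strictMono, ?_, ?_⟩
      · intro j
        have := Finset.orderEmbOfFin_mem (Cset l n t) hH j
        simp only [Cset, Finset.mem_filter, Nat.mem_divisors] at this
        exact this.1.1
      · intro a b
        have hma := Finset.orderEmbOfFin_mem (Cset l n t) hH a
        have hmb := Finset.orderEmbOfFin_mem (Cset l n t) hH b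
        simp only [Cset, Finset.mem_filter] at hma hmb
        exact lt_of_le_of_lt hmb.2.1 (not_le.mp hma.2.2)
  · -- upper bound
    rintro h ⟨d, hmono, hdvd, hlt⟩
    rcases Nat.eq_zero_or_pos h with h0 | h0
    · exact h0 ▸ Nat.zero_le _
    · set i₀ : Fin h := ⟨h-1, by omega⟩ with hi₀
      set t : ℝ := ((d i₀ : ℕ) : ℝ) with htdef
      have hsub : Finset.image d Finset.univ ⊆ Cset l n t := by
        intro x hx
        rw [Finset.mem_image] at hx
        obtain ⟨j, -, rfl⟩ := hx
        simp only [Cset, Finset.mem_filter, Nat.mem_divisors]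
        refine ⟨⟨hdvd j, by omega⟩, ?_, ?_⟩
        · exact Nat.cast_le.mpr (hmono.monotone (by rw [Fin.le_def]; exact Nat.le_sub_one_of_lt j.2))
        · exact not_le.mpr (hlt j i₀)
      have hcard : h ≤ (Cset l n t).card := by
        have := Finset.card_le_card hsub
        rwa [Finset.card_image_of_injective _ hmono.injective, Finset.card_univ,
          Fintype.card_fin] at this
      exact le_trans hcard (key1 t)
end

section
/- An integer n ≥ 1 is not even-trapezoidal if and only if ⟨⟨n⟩⟩_2 = a^k b^k for some integer k ≥ 1. -/
open scoped Classical symmDiff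

lemma sumEq (a m : ℕ) : ∑ k ∈ Finset.range (2*m), (a+k) = 2*m*a + m*(2*m-1) := by
  rw [Finset.sum_add_distrib, Finset.sum_const, Finset.card_range, smul_eq_mul]
  have h1 := Finset.sum_range_id_mul_two (2*m)
  have h2 : 2*(m*(2*m-1)) = (2*m)*(2*m-1) := by ring
  omega

lemma pow2_uniq_aux {s u v q : ℕ} (hsv : s ≤ v) (hu : Odd u) (hq : Odd q)
    (h : 2^s * u = 2^v * q) : s = v ∧ u = q := by
  have h2 : (0:ℕ) < 2^s := Nat.pow_pos (by norm_num)
  have hu' : u = 2^(v-s) * q := by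
    apply Nat.eq_of_mul_eq_mul_left h2
    rw [h, ← mul_assoc, ← pow_add]
    congr 2
    omega
  rcases Nat.eq_or_lt_of_le hsv with rfl | hlt
  · simp at hu'
    omega
  · exfalso
    have hd : 2 ∣ 2^(v-s) := dvd_pow_self 2 (by omega)
    obtain ⟨c, hc⟩ := hd
    obtain ⟨e, he⟩ := hu
    have : u = 2*(c*q) := by rw [hu', hc]; ring
    omega

lemma pow2_uniq {s u v q : ℕ} (hu : Odd u) (hq : Odd q)
    (h : 2^s * u = 2^v * q) : s = v ∧ u = q := by
  rcases le_total s v with hle | hle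
  · exact pow2_uniq_aux hle hu hq h
  · obtain ⟨h1, h2⟩ := pow2_uniq_aux hle hq hu h.symm
    exact ⟨h1.symm, h2.symm⟩

lemma trap_iff (v q : ℕ) (hq : Odd q) : IsEvenTrapezoidal (2^v*q) ↔ 2^(v+1) < q := by
  constructor
  · rintro ⟨a, m, ha, hm, heq⟩
    rw [sumEq] at heq
    obtain ⟨s, t, ht, rfl⟩ := Nat.exists_eq_two_pow_mul_odd (show m ≠ 0 by omega)
    obtain ⟨M, hM⟩ : ∃ M, 2^s * t = M + 1 := ⟨2^s*t - 1, by omega⟩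
    rw [hM] at heq
    have e1 : 2*(M+1)*a + (M+1)*(2*(M+1)-1) = (M+1)*(2*a+2*M+1) := by
      have h2 : 2*(M+1) - 1 = 2*M+1 := by omega
      rw [h2]; ring
    have heq2 : 2^v * q = 2^s * (t * (2*a + 2*M + 1)) := by
      rw [heq, e1, ← hM]; ring
    have hoddr : Odd (t * (2*a + 2*M + 1)) := ht.mul ⟨a + M, by ring⟩
    obtain ⟨rfl, hqe⟩ := pow2_uniq hq hoddr heq2
    have ht1 : 0 < t := ht.pos
    have hb1 : 2^v ≤ M + 1 := hM ▸ Nat.le_mul_of_pos_right _ ht1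
    have hb2 : (2*a+2*M+1) ≤ q := hqe ▸ Nat.le_mul_of_pos_left _ ht1
    rw [pow_succ]
    omega
  · intro h
    obtain ⟨c, rfl⟩ := hq
    have hc : 2^v ≤ c := by
      rw [pow_succ] at h; omega
    refine ⟨c - 2^v + 1, 2^v, by omega, Nat.one_le_two_pow, ?_⟩
    rw [sumEq]
    obtain ⟨e, he⟩ : ∃ e, c = 2^v + e := ⟨c - 2^v, by omega⟩
    have hpow1 : 1 ≤ 2^v := Nat.one_le_two_pow
    obtain ⟨P, hP⟩ : ∃ P, 2^v = P + 1 := ⟨2^v - 1, by omega⟩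
    subst he
    rw [hP]
    have h1 : P + 1 + e - (P+1) + 1 = e + 1 := by omega
    have h2 : 2*(P+1) - 1 = 2*P+1 := by omega
    rw [h1, h2]
    ring


lemma odd_dvd_aux {v q d : ℕ} (hq : Odd q) (hd : d ∣ 2^v * q) (hodd : Odd d) : d ∣ q := by
  have hcop : Nat.Coprime d (2^v) := Nat.Coprime.pow_right _ (Nat.coprime_two_right.mpr hodd)
  exact hcop.dvd_of_dvd_mul_left hd

lemma pow_dvd_of_not_two_mul_dvd {v q d : ℕ} (hq : Odd q) (hd : d ∣ 2^v * q)
    (hd0 : d ≠ 0) (h2 : ¬ (2 * d ∣ 2^v * q)) : 2^v ∣ d := by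
  obtain ⟨s, u, hu, rfl⟩ := Nat.exists_eq_two_pow_mul_odd hd0
  rcases le_or_gt v s with hle | hlt
  · exact Dvd.dvd.mul_right (pow_dvd_pow 2 hle) u
  · exfalso
    apply h2
    have huq : u ∣ q := odd_dvd_aux hq (dvd_trans (dvd_mul_left u (2^s)) hd) hu
    have : 2 * (2^s * u) = 2^(s+1) * u := by rw [pow_succ]; ring
    rw [this]
    exact mul_dvd_mul (pow_dvd_pow 2 (by omega)) huq

lemma sort_union_of_lt {A B : Finset ℝ} (h : ∀ x ∈ A, ∀ y ∈ B, x < y) :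
    (A ∪ B).sort (· ≤ ·) = A.sort (· ≤ ·) ++ B.sort (· ≤ ·) := by
  have hdisj : Disjoint A B := by
    rw [Finset.disjoint_left]
    intro a ha hb
    exact lt_irrefl a (h a ha a hb)
  have hperm : List.Perm ((A ∪ B).sort (· ≤ ·)) (A.sort (· ≤ ·) ++ B.sort (· ≤ ·)) := by
    apply Multiset.coe_eq_coe.mp
    have h1 : ((A ∪ B).sort (· ≤ ·) : Multiset ℝ) = (A ∪ B).1 := Finset.sort_eq _ _
    have h2 : ((A.sort (· ≤ ·) ++ B.sort (· ≤ ·) : List ℝ) : Multiset ℝ)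
        = A.1 + B.1 := by
      rw [← Multiset.coe_add, Finset.sort_eq, Finset.sort_eq]
    rw [h1, h2, ← Finset.disjUnion_eq_union A B hdisj]
    rfl
  have hsorted : List.Pairwise (· ≤ ·) (A.sort (· ≤ ·) ++ B.sort (· ≤ ·)) := by
    rw [List.pairwise_append]
    refine ⟨Finset.pairwise_sort _ _, Finset.pairwise_sort _ _, ?_⟩
    intro a ha b hb
    exact le_of_lt (h a ((Finset.mem_sort _).mp ha) b ((Finset.mem_sort _).mp hb))
  exact List.Perm.eq_of_pairwise' (Finset.pairwise_sort _ _) hsorted hperm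

/-- `n` is not even-trapezoidal iff `⟨⟨n⟩⟩₂ = aᵏbᵏ` for some `k ≥ 1`. -/
theorem not_trapezoidal_iff_krWord_eq_ak_bk (n : ℕ) (hn : 1 ≤ n) :
    ¬ IsEvenTrapezoidal n ↔
      ∃ k : ℕ, 1 ≤ k ∧ krWord 2 n = List.replicate k true ++ List.replicate k false := by
  obtain ⟨v, q, hq, rfl⟩ := Nat.exists_eq_two_pow_mul_odd (show n ≠ 0 by omega)
  have hq1 : 0 < q := hq.pos
  have hN0 : 2^v * q ≠ 0 := by positivity
  rw [trap_iff v q hq, not_lt]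
  have hpv : (0:ℕ) < 2^v := Nat.pow_pos (by norm_num)
  have hne : q ≠ 2^(v+1) := by
    intro h
    obtain ⟨c, hc⟩ := hq
    have h2 : 2 ∣ 2^(v+1) := dvd_pow_self 2 (by omega)
    obtain ⟨m, hm⟩ := h2
    omega
  have memD : ∀ x : ℝ, x ∈ divisorsR (2^v*q) ↔ ∃ d : ℕ, d ∣ 2^v*q ∧ (d:ℝ) = x := by
    intro x
    simp [divisorsR, Finset.mem_image, Nat.mem_divisors, hN0]
  have memL : ∀ x : ℝ, x ∈ lamDivisorsR 2 (2^v*q) ↔ ∃ d : ℕ, d ∣ 2^v*q ∧ 2*(d:ℝ) = x := by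
    intro x
    simp [lamDivisorsR, Finset.mem_image, Nat.mem_divisors, hN0]
  constructor
  · intro hle
    have hlt : q < 2^(v+1) := lt_of_le_of_ne hle hne
    set A := divisorsR (2^v*q) \ lamDivisorsR 2 (2^v*q) with hA
    set B := lamDivisorsR 2 (2^v*q) \ divisorsR (2^v*q) with hB
    have key : ∀ x ∈ A, ∀ y ∈ B, x < y := by
      intro x hx y hy
      obtain ⟨hxD, hxL⟩ := Finset.mem_sdiff.mp hx
      obtain ⟨hyL, hyD⟩ := Finset.mem_sdiff.mp hy
      obtain ⟨d, hd, rfl⟩ := (memD x).mp hxD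
      obtain ⟨e, he, rfl⟩ := (memL y).mp hyL
      have hdodd : Odd d := by
        rw [Nat.odd_iff]
        by_contra h'
        have h2d : 2 ∣ d := by omega
        obtain ⟨c, rfl⟩ := h2d
        exact hxL ((memL _).mpr ⟨c, dvd_trans (dvd_mul_left c 2) hd, by push_cast; ring⟩)
      have hdq : d ∣ q := odd_dvd_aux hq hd hdodd
      have hdle : d ≤ q := Nat.le_of_dvd hq1 hdq
      have h2e : ¬ (2*e ∣ 2^v*q) := by
        intro hdvd
        exact hyD ((memD _).mpr ⟨2*e, hdvd, by push_cast; ring⟩)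
      have he0 : e ≠ 0 := by rintro rfl; exact hN0 (Nat.eq_zero_of_zero_dvd he)
      have hpe : 2^v ∣ e := pow_dvd_of_not_two_mul_dvd hq he he0 h2e
      have hele : 2^v ≤ e := Nat.le_of_dvd (Nat.pos_of_ne_zero he0) hpe
      have hlt2 : d < 2*e := by rw [pow_succ] at hlt; omega
      calc (d:ℝ) < ((2*e : ℕ):ℝ) := by exact_mod_cast hlt2
        _ = 2*(e:ℝ) := by push_cast; ring
    have hdisj : Disjoint A B := disjoint_sdiff_sdiff
    have hsd : divisorsR (2^v*q) ∆ lamDivisorsR 2 (2^v*q) = A ∪ B := by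
      rw [symmDiff_def, Finset.sup_eq_union]
    have hinj1 : Function.Injective (fun d : ℕ => (d:ℝ)) := Nat.cast_injective
    have hinj2 : Function.Injective (fun d : ℕ => 2*(d:ℝ)) := by
      intro a b hab
      simp only at hab
      exact Nat.cast_injective (by linarith : (a:ℝ) = b)
    have hcardD : (divisorsR (2^v*q)).card = (lamDivisorsR 2 (2^v*q)).card := by
      have e1 : divisorsR (2^v*q) = (2^v*q).divisors.image (fun d : ℕ => (d:ℝ)) := by
        ext x
        rw [memD x]
        simp [Finset.mem_image, Nat.mem_divisors, hN0]
      have e2 : lamDivisorsR 2 (2^v*q) = (2^v*q).divisors.image (fun d : ℕ => 2*(d:ℝ)) := by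
        ext x
        rw [memL x]
        simp [Finset.mem_image, Nat.mem_divisors, hN0]
      rw [e1, e2, Finset.card_image_of_injective _ hinj1, Finset.card_image_of_injective _ hinj2]
    have hcard : A.card = B.card := Finset.card_sdiff_comm hcardD
    have hk1 : 1 ≤ A.card := by
      apply Finset.card_pos.mpr
      refine ⟨1, Finset.mem_sdiff.mpr ⟨(memD 1).mpr ⟨1, one_dvd _, by norm_num⟩, ?_⟩⟩
      intro hmem
      obtain ⟨e, he, heq⟩ := (memL 1).mp hmem
      have he0 : e ≠ 0 := by rintro rfl; exact hN0 (Nat.eq_zero_of_zero_dvd he)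
      have : (1:ℝ) ≤ (e:ℝ) := by exact_mod_cast Nat.one_le_iff_ne_zero.mpr he0
      linarith
    refine ⟨A.card, hk1, ?_⟩
    rw [krWord, hsd, sort_union_of_lt key, List.map_append]
    congr 1
    · rw [List.eq_replicate_iff]
      constructor
      · rw [List.length_map, Finset.length_sort]
      · intro b hb
        obtain ⟨x, hx, rfl⟩ := List.mem_map.mp hb
        have hxA : x ∈ A := (Finset.mem_sort _).mp hx
        have : x ∈ divisorsR (2^v*q) := (Finset.mem_sdiff.mp hxA).1
        simp [this]
    · rw [hcard, List.eq_replicate_iff]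
      constructor
      · rw [List.length_map, Finset.length_sort]
      · intro b hb
        obtain ⟨x, hx, rfl⟩ := List.mem_map.mp hb
        have hxB : x ∈ B := (Finset.mem_sort _).mp hx
        have : x ∉ divisorsR (2^v*q) := (Finset.mem_sdiff.mp hxB).2
        simp [this]
  · rintro ⟨k, hk, hw⟩
    by_contra hgt'
    push_neg at hgt'
    simp only [krWord] at hw
    set f := fun x : ℝ => decide (x ∈ divisorsR (2^v*q)) with hf
    set L := (divisorsR (2^v*q) ∆ lamDivisorsR 2 (2^v*q)).sort (· ≤ ·) with hL
    have hxB1 : ((2^(v+1) : ℕ):ℝ) ∈ lamDivisorsR 2 (2^v*q) := by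
      apply (memL _).mpr
      refine ⟨2^v, dvd_mul_right (2^v) q, ?_⟩
      rw [pow_succ]
      push_cast
      ring
    have hxB2 : ((2^(v+1):ℕ):ℝ) ∉ divisorsR (2^v*q) := by
      intro hmem
      obtain ⟨d, hd, hdeq⟩ := (memD _).mp hmem
      have hde : d = 2^(v+1) := Nat.cast_injective hdeq
      subst hde
      rw [pow_succ] at hd
      have h2q : 2 ∣ q := (mul_dvd_mul_iff_left (show (2:ℕ)^v ≠ 0 by positivity)).mp hd
      obtain ⟨c, hc⟩ := hq
      omega
    have hyA1 : ((q:ℕ):ℝ) ∈ divisorsR (2^v*q) := (memD _).mpr ⟨q, dvd_mul_left _ _, rfl⟩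
    have hyA2 : ((q:ℕ):ℝ) ∉ lamDivisorsR 2 (2^v*q) := by
      intro hmem
      obtain ⟨e, he, heq⟩ := (memL _).mp hmem
      have : q = 2*e := by exact_mod_cast heq.symm
      obtain ⟨c, hc⟩ := hq
      omega
    have hxy : ((2^(v+1):ℕ):ℝ) < ((q:ℕ):ℝ) := by exact_mod_cast hgt'
    have hxL : ((2^(v+1):ℕ):ℝ) ∈ L := by
      rw [hL, Finset.mem_sort, Finset.mem_symmDiff]
      exact Or.inr ⟨hxB1, hxB2⟩
    have hyL : ((q:ℕ):ℝ) ∈ L := by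
      rw [hL, Finset.mem_sort, Finset.mem_symmDiff]
      exact Or.inl ⟨hyA1, hyA2⟩
    have hs1 : L.Pairwise (· < ·) := (Finset.sortedLT_sort _).pairwise
    have hs2 : (L.map f).Pairwise (fun a b => b ≤ a) := by
      rw [hw]
      apply List.pairwise_append.mpr
      refine ⟨?_, ?_, ?_⟩
      · exact List.pairwise_replicate.mpr (Or.inr le_rfl)
      · exact List.pairwise_replicate.mpr (Or.inr le_rfl)
      · intro a ha b hb
        rw [List.eq_of_mem_replicate ha, List.eq_of_mem_replicate hb]
        exact Bool.false_le true
    have hs3 : L.Pairwise (fun a b => f b ≤ f a) := List.pairwise_map.mp hs2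
    have hS : L.Pairwise (fun a b => (a < b ∧ f b ≤ f a) ∨ (b < a ∧ f a ≤ f b)) :=
      (hs1.and hs3).imp (fun h => Or.inl h)
    have hsym : Symmetric (fun a b : ℝ => (a < b ∧ f b ≤ f a) ∨ (b < a ∧ f a ≤ f b)) :=
      fun _ _ h => Or.symm h
    have hfin := (haveI : Std.Symm (fun a b : ℝ => (a < b ∧ f b ≤ f a) ∨ (b < a ∧ f a ≤ f b)) := ⟨fun _ _ h => hsym h⟩; hS.forall hxL hyL (ne_of_lt hxy))
    have hfx : f ((2^(v+1):ℕ):ℝ) = false := decide_eq_false hxB2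
    have hfy : f ((q:ℕ):ℝ) = true := decide_eq_true hyA1
    rcases hfin with ⟨_, hle⟩ | ⟨hlt2, _⟩
    · rw [hfx, hfy] at hle
      exact absurd hle (by decide)
    · exact absurd hxy (not_lt.mpr (le_of_lt hlt2))
end

section
/- An integer n ≥ 1 is the semi-perimeter of a Pythagorean triangle if and only if there exist two divisors d_1 and d_2 of n satisfying d_1 < d_2 < 2·d_1. -/
open scoped Classical symmDiff

private lemma aux_close_divisors (n A : ℕ) (hn : 0 < n) (h1 : n < A) (h2 : A < 2 * n)
    (hd : A ∣ 2 * n ^ 2) :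
    ∃ d₁ d₂ : ℕ, d₁ ∣ n ∧ d₂ ∣ n ∧ d₁ < d₂ ∧ d₂ < 2 * d₁ := by
  set g := Nat.gcd A n with hgdef
  have hg : 0 < g := Nat.gcd_pos_of_pos_right _ hn
  set a := A / g with hadef
  set m := n / g with hmdef
  have hA : A = g * a := (Nat.mul_div_cancel' (Nat.gcd_dvd_left A n)).symm
  have hN : n = g * m := (Nat.mul_div_cancel' (Nat.gcd_dvd_right A n)).symm
  have hco : Nat.Coprime a m := Nat.coprime_div_gcd_div_gcd hg
  have hmn : m ∣ n := ⟨g, by rw [hN]; ring⟩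
  have hgn : g ∣ n := Nat.gcd_dvd_right A n
  have hdvd : a ∣ 2 * g := by
    have h' : g * a ∣ g * (2 * g * m ^ 2) := by
      have : 2 * n ^ 2 = g * (2 * g * m ^ 2) := by rw [hN]; ring
      rw [← hA, ← this]; exact hd
    have h'' : a ∣ (2 * g) * m ^ 2 :=
      (mul_dvd_mul_iff_left (show g ≠ 0 by omega)).mp h'
    exact (Nat.Coprime.dvd_of_dvd_mul_right (hco.pow_right 2) h'')
  have hma : m < a := by
    have : g * m < g * a := by rw [← hA, ← hN]; exact h1
    exact lt_of_mul_lt_mul_left this (Nat.zero_le g)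
  have ha2m : a < 2 * m := by
    have : g * a < g * (2 * m) := by rw [← hA]; calc A < 2 * n := h2
                                                  _ = g * (2 * m) := by rw [hN]; ring
    exact lt_of_mul_lt_mul_left this (Nat.zero_le g)
  rcases Nat.even_or_odd a with he | ho
  · obtain ⟨a', ha'⟩ := he
    have ha' : a = 2 * a' := by omega
    have ha'g : a' ∣ g := by
      have : 2 * a' ∣ 2 * g := ha' ▸ hdvd
      exact (mul_dvd_mul_iff_left (two_ne_zero)).mp this
    exact ⟨a', m, ha'g.trans hgn, hmn, by omega, by omega⟩
  · have hco2 : Nat.Coprime a 2 := by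
      have : ¬ (2 ∣ a) := by rw [Nat.odd_iff] at ho; omega
      rcases (Nat.coprime_or_dvd_of_prime Nat.prime_two a) with h | h
      · exact h.symm
      · exact absurd h this
    have hag : a ∣ g := hco2.dvd_of_dvd_mul_right (by rwa [mul_comm] at hdvd)
    exact ⟨m, a, hmn, hag.trans hgn, hma, ha2m⟩

/-- `n` is the semi-perimeter of a Pythagorean triangle iff `n` has two
divisors `d₁ < d₂ < 2·d₁`. -/
theorem semiperimeter_iff_two_close_divisors (n : ℕ) (hn : 1 ≤ n) :
    IsPythSemiPerimeter n ↔ ∃ d₁ d₂ : ℕ, d₁ ∣ n ∧ d₂ ∣ n ∧ d₁ < d₂ ∧ d₂ < 2 * d₁ := by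
  constructor
  · rintro ⟨x, y, z, hx, hy, hz, hpyth, hsum⟩
    have hyz : y < z := by nlinarith
    have hxz : x < z := by nlinarith
    have hAB : (x + z) * (y + z) = 2 * n ^ 2 := by nlinarith [sq_nonneg (x + y + z)]
    refine aux_close_divisors n (x + z) hn ?_ ?_ ⟨y + z, hAB.symm⟩
    · omega
    · omega
  · rintro ⟨d₁, d₂, hd₁, hd₂, hlt, hlt2⟩
    have hd₂pos : 0 < d₂ := Nat.pos_of_dvd_of_pos hd₂ hn
    have hd₁pos : 0 < d₁ := by omega
    set g := Nat.gcd d₁ d₂ with hgdef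
    have hg : 0 < g := Nat.gcd_pos_of_pos_left _ hd₁pos
    set a := d₁ / g with hadef
    set b := d₂ / g with hbdef
    have hd1 : d₁ = g * a := (Nat.mul_div_cancel' (Nat.gcd_dvd_left d₁ d₂)).symm
    have hd2 : d₂ = g * b := (Nat.mul_div_cancel' (Nat.gcd_dvd_right d₁ d₂)).symm
    have hab : a < b := by
      have : g * a < g * b := by rw [← hd1, ← hd2]; exact hlt
      exact lt_of_mul_lt_mul_left this (Nat.zero_le g)
    have hb2a : b < 2 * a := by
      have : g * b < g * (2 * a) := by rw [← hd2]; calc d₂ < 2 * d₁ := hlt2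
                                                      _ = g * (2 * a) := by rw [hd1]; ring
      exact lt_of_mul_lt_mul_left this (Nat.zero_le g)
    have hapos : 0 < a := by omega
    have hlcm : Nat.lcm d₁ d₂ ∣ n := Nat.lcm_dvd hd₁ hd₂
    have hlcmval : Nat.lcm d₁ d₂ = g * a * b := by
      have h1 : g * Nat.lcm d₁ d₂ = g * (g * a * b) := by
        rw [Nat.gcd_mul_lcm d₁ d₂, hd1, hd2]; ring
      exact Nat.eq_of_mul_eq_mul_left hg h1
    obtain ⟨s, hs⟩ := hlcm
    rw [hlcmval] at hs
    have hspos : 0 < s := by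
      rcases Nat.eq_zero_or_pos s with h | h
      · subst h; omega
      · exact h
    set q := b - a with hqdef
    have hq : 0 < q := by omega
    have hqa : q < a := by omega
    have hbq : b = a + q := by omega
    have hk : 0 < g * s := Nat.mul_pos hg hspos
    have hq2 : q ^ 2 ≤ a ^ 2 := Nat.pow_le_pow_left (by omega) 2
    refine ⟨g * s * (a ^ 2 - q ^ 2), g * s * (2 * a * q), g * s * (a ^ 2 + q ^ 2), ?_, ?_, ?_, ?_, ?_⟩
    · have : 0 < a ^ 2 - q ^ 2 := by
        have : q ^ 2 < a ^ 2 := Nat.pow_lt_pow_left hqa (by norm_num)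
        omega
      positivity
    · positivity
    · positivity
    · zify [hq2]; ring
    · have hn' : (n : ℤ) = g * a * b * s := by exact_mod_cast hs
      zify [hq2]
      rw [hn']
      have hbq' : (b : ℤ) = a + q := by exact_mod_cast hbq
      rw [hbq']; ring
end

section
/- For every integer n ≥ 1, the number of partitions of n into an even number of consecutive parts equals the number of divisors d of n such that d ∉ 2D_n and d > √(2n), where D_n is the set of divisors of n and 2D_n = {2e : e ∈ D_n}. -/
open scoped Classical symmDiff

private lemma sum_consec_aux (a m : ℕ) :
    ∑ k ∈ Finset.range (2*(m+1)), ((a+1)+k) = (m+1) * (2*a + 2*m + 3) := by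
  induction m with
  | zero => simp [Finset.sum_range_succ]; ring
  | succ m ih =>
    have h : 2*(m+1+1) = (2*(m+1)+1)+1 := by ring
    rw [h, Finset.sum_range_succ, Finset.sum_range_succ, ih]
    ring

private lemma sum_consec (a m : ℕ) (ha : 1 ≤ a) (hm : 1 ≤ m) :
    ∑ k ∈ Finset.range (2*m), (a+k) = m * (2*a + 2*m - 1) := by
  obtain ⟨a', rfl⟩ : ∃ a', a = a' + 1 := ⟨a - 1, by omega⟩
  obtain ⟨m', rfl⟩ : ∃ m', m = m' + 1 := ⟨m - 1, by omega⟩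
  have h : 2*(a'+1) + 2*(m'+1) - 1 = 2*a' + 2*m' + 3 := by omega
  rw [h]
  exact sum_consec_aux a' m'

/-- The number of partitions of `n` into an even number of consecutive parts
equals the number of divisors `d` of `n` with `d ∉ 2·D_n` and `d > √(2n)`. -/
theorem card_even_consecutive_partitions (n : ℕ) (hn : 1 ≤ n) :
    Set.ncard {p : ℕ × ℕ | 1 ≤ p.1 ∧ 1 ≤ p.2 ∧
        n = ∑ k ∈ Finset.range (2 * p.2), (p.1 + k)} =
      (n.divisors.filter (fun d =>
        d ∉ n.divisors.image (fun e : ℕ => (2 * e : ℕ)) ∧ Real.sqrt (2 * (n : ℝ)) < (d : ℝ))).card := by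
  classical
  set S : Set (ℕ × ℕ) := {p : ℕ × ℕ | 1 ≤ p.1 ∧ 1 ≤ p.2 ∧
        n = ∑ k ∈ Finset.range (2 * p.2), (p.1 + k)} with hSdef
  set T := n.divisors.filter (fun d =>
        d ∉ n.divisors.image (fun e : ℕ => (2 * e : ℕ)) ∧ Real.sqrt (2 * (n : ℝ)) < (d : ℝ)) with hTdef
  set f : ℕ × ℕ → ℕ := fun p => 2 * p.1 + 2 * p.2 - 1 with hfdef
  -- membership characterization of S
  have hS : ∀ p : ℕ × ℕ, p ∈ S ↔ 1 ≤ p.1 ∧ 1 ≤ p.2 ∧ n = p.2 * (2 * p.1 + 2 * p.2 - 1) := by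
    rintro ⟨a, m⟩
    constructor
    · rintro ⟨ha, hm, hsum⟩
      exact ⟨ha, hm, by rw [hsum, sum_consec a m ha hm]⟩
    · rintro ⟨ha, hm, hsum⟩
      exact ⟨ha, hm, by rw [hsum, sum_consec a m ha hm]⟩
  -- membership characterization of T
  have hT : ∀ d : ℕ, d ∈ T ↔ d ∣ n ∧ ¬ 2 ∣ d ∧ 2 * n < d ^ 2 := by
    intro d
    rw [hTdef, Finset.mem_filter, Nat.mem_divisors]
    constructor
    · rintro ⟨⟨hdvd, -⟩, hnotim, hsqrt⟩
      have hd0 : 0 < d := Nat.pos_of_dvd_of_pos hdvd (by omega)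
      refine ⟨hdvd, ?_, ?_⟩
      · intro h2
        apply hnotim
        refine Finset.mem_image.mpr ⟨d / 2, Nat.mem_divisors.mpr ⟨dvd_trans ⟨2, by omega⟩ hdvd, by omega⟩, by omega⟩
      · have := (Real.sqrt_lt' (by exact_mod_cast hd0)).mp hsqrt
        have : (2 * n : ℝ) < (d : ℝ) ^ 2 := by push_cast at this ⊢; linarith
        exact_mod_cast this
    · rintro ⟨hdvd, hodd, hsq⟩
      have hd0 : 0 < d := Nat.pos_of_dvd_of_pos hdvd (by omega)
      refine ⟨⟨hdvd, by omega⟩, ?_, ?_⟩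
      · intro him
        obtain ⟨e, -, he⟩ := Finset.mem_image.mp him
        exact hodd ⟨e, he.symm⟩
      · refine (Real.sqrt_lt' (by exact_mod_cast hd0)).mpr ?_
        have : (2 * n : ℝ) < (d : ℝ) ^ 2 := by exact_mod_cast hsq
        push_cast at this ⊢
        linarith
  have hinj : Set.InjOn f S := by
    rintro ⟨a, m⟩ hp ⟨a', m'⟩ hq hfe
    obtain ⟨ha, hm, hne⟩ := (hS _).mp hp
    obtain ⟨ha', hm', hne'⟩ := (hS _).mp hq
    simp only [hfdef] at hfe
    simp only at ha hm ha' hm' hne hne' hfe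
    have hd0 : 0 < 2 * a + 2 * m - 1 := by omega
    have hmm : m = m' := by
      have heq := hne.symm.trans hne'
      rw [← hfe] at heq
      exact Nat.eq_of_mul_eq_mul_right hd0 heq
    have : a = a' := by omega
    simp [this, hmm]
  have himg : f '' S = ↑T := by
    ext d
    simp only [Set.mem_image, Finset.coe_sort_coe, Finset.mem_coe]
    rw [hT d]
    constructor
    · rintro ⟨⟨a, m⟩, hp, rfl⟩
      obtain ⟨ha, hm, hne⟩ := (hS _).mp hp
      simp only at ha hm hne
      simp only [hfdef]
      refine ⟨⟨m, by rw [hne]; ring⟩, by omega, ?_⟩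
      have h1 : 2 * m < 2 * a + 2 * m - 1 := by omega
      calc 2 * n = (2 * m) * (2 * a + 2 * m - 1) := by rw [hne]; ring
        _ < (2 * a + 2 * m - 1) * (2 * a + 2 * m - 1) :=
            Nat.mul_lt_mul_of_lt_of_le h1 le_rfl (by omega)
        _ = (2 * a + 2 * m - 1) ^ 2 := by ring
    · rintro ⟨hdvd, hodd, hsq⟩
      have hd0 : 0 < d := Nat.pos_of_dvd_of_pos hdvd (by omega)
      obtain ⟨m, hnm⟩ := hdvd
      have hm0 : 0 < m := by
        rcases Nat.eq_zero_or_pos m with h | h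
        · subst h; simp at hnm; omega
        · exact h
      have h2m : 2 * m < d := by
        have : d * (2 * m) < d * d := by
          calc d * (2 * m) = 2 * n := by rw [hnm]; ring
            _ < d ^ 2 := hsq
            _ = d * d := by ring
        exact lt_of_mul_lt_mul_left this (Nat.zero_le d)
      refine ⟨((d + 1) / 2 - m, m), (hS _).mpr ⟨by omega, hm0, ?_⟩, ?_⟩
      · simp only
        have : 2 * ((d + 1) / 2 - m) + 2 * m - 1 = d := by omega
        rw [this, hnm]; ring
      · simp only [hfdef]; omega
  calc S.ncard = (f '' S).ncard := (Set.ncard_image_of_injOn hinj).symm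
    _ = (↑T : Set ℕ).ncard := by rw [himg]
    _ = T.card := Set.ncard_coe_finset T
end
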